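/- arXiv:math/9702230 — 11 statements merged into one kernel-verified Lean document; each statement's English description precedes it below -/
import Mathlib

section
/- Let S be a commutative ring, 𝔞 an ideal of S, and M an S-module. Let N ⊆ W ⊆ M be S-submodules. If N is 𝔞-closed in M and the image W/N is 𝔞-closed in M/N, then W is 𝔞-closed in M. -/
/-- Let `S` be a commutative ring, `𝔞` an ideal of `S`, and `M` an
`S`-module.  A submodule `N ⊆ M` is called `𝔞`-closed in `M` if `N ⊓ 𝔞M = 𝔞N`.
If `N ⊆ W ⊆ M` are submodules, `N` is `𝔞`-closed in `M` and the image `W/N` is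
`𝔞`-closed in `M/N`, then `W` is `𝔞`-closed in `M`. -/
theorem aClosed_of_aClosed_quotient {S : Type*} [CommRing S] {M : Type*}
    [AddCommGroup M] [Module S M] (𝔞 : Ideal S) (N W : Submodule S M)
    (hNW : N ≤ W)
    (hN : N ⊓ 𝔞 • (⊤ : Submodule S M) = 𝔞 • N)
    (hW : (W.map N.mkQ) ⊓ 𝔞 • (⊤ : Submodule S (M ⧸ N)) = 𝔞 • (W.map N.mkQ)) :
    W ⊓ 𝔞 • (⊤ : Submodule S M) = 𝔞 • W := by
  refine le_antisymm ?_ (le_inf (Submodule.smul_le_right) (Submodule.smul_mono le_rfl le_top))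
  intro x hx
  obtain ⟨hxW, hxA⟩ := hx
  have hq : N.mkQ x ∈ (W.map N.mkQ) ⊓ 𝔞 • (⊤ : Submodule S (M ⧸ N)) := by
    constructor
    · exact ⟨x, hxW, rfl⟩
    · have : (⊤ : Submodule S (M ⧸ N)) = (⊤ : Submodule S M).map N.mkQ := by
        rw [Submodule.map_top, Submodule.range_mkQ]
      rw [this, ← Submodule.map_smul'']
      exact ⟨x, hxA, rfl⟩
  rw [hW, ← Submodule.map_smul''] at hq
  obtain ⟨y, hy, hyx⟩ := hq
  have hxy : x - y ∈ N := by
    rw [← Submodule.Quotient.mk_eq_zero]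
    have : N.mkQ (x - y) = 0 := by
      rw [map_sub, hyx, sub_self]
    simpa using this
  have hxyA : x - y ∈ 𝔞 • (⊤ : Submodule S M) :=
    Submodule.sub_mem _ hxA (Submodule.smul_mono le_rfl le_top hy)
  have : x - y ∈ 𝔞 • N := hN ▸ ⟨hxy, hxyA⟩
  have : x - y ∈ 𝔞 • W := Submodule.smul_mono le_rfl hNW this
  have := Submodule.add_mem _ hy this
  simpa using this
end

section
/- Let S be a commutative Noetherian ring, M a finitely generated S-module, and 𝔭 a prime ideal of S belonging to the support of M (i.e. the localization M_𝔭 is nonzero). Then there exists ω ∈ M such that the cyclic submodule N = S·ω is nonzero and 𝔭-closed in M, i.e. N ≠ 0 and N ∩ 𝔭M = 𝔭N. -/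
/-- Let `S` be a commutative Noetherian ring, `M` a finitely
generated `S`-module and `𝔭` a prime ideal in the support of `M` (i.e. the
localization `M_𝔭` is nonzero).  Then there exists `ω ∈ M` such that the cyclic
submodule `N = S·ω` is nonzero and `𝔭`-closed in `M`, i.e. `N ≠ 0` and
`N ∩ 𝔭M = 𝔭N`. -/
theorem exists_cyclic_prime_closed_submodule {S : Type*} [CommRing S]
    [IsNoetherianRing S] {M : Type*} [AddCommGroup M] [Module S M]
    [Module.Finite S M] (𝔭 : Ideal S) [𝔭.IsPrime]
    (hsupp : Nontrivial (LocalizedModule 𝔭.primeCompl M)) :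
    ∃ ω : M, Submodule.span S {ω} ≠ ⊥ ∧
      Submodule.span S {ω} ⊓ 𝔭 • (⊤ : Submodule S M)
        = 𝔭 • Submodule.span S {ω} := by
  classical
  set R := Localization 𝔭.primeCompl with hR
  set L := LocalizedModule 𝔭.primeCompl M with hL
  set f : M →ₗ[S] L := LocalizedModule.mkLinearMap 𝔭.primeCompl M with hf
  have hfin : Module.Finite R L :=
    Module.Finite.of_isLocalizedModule 𝔭.primeCompl f
  set N : Submodule R L := (𝔭.map (algebraMap S R)) • (⊤ : Submodule R L) with hN
  have hNtop : N ≠ ⊤ := by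
    intro h
    have hbot : (⊤ : Submodule R L) = ⊥ := by
      refine Submodule.eq_bot_of_eq_ideal_smul_of_le_jacobson_annihilator
        (Module.finite_def.mp hfin) h.symm ?_
      rw [Localization.AtPrime.map_eq_maximalIdeal]
      exact IsLocalRing.maximalIdeal_le_jacobson _
    exact absurd hbot (bot_ne_top (α := Submodule R L)).symm
  have hω : ∃ ω : M, f ω ∉ N := by
    by_contra h
    push_neg at h
    apply hNtop
    rw [eq_top_iff]
    rintro x -
    induction x using LocalizedModule.induction_on with
    | h m s =>
      have hx : LocalizedModule.mk m s = (Localization.mk 1 s) • f m := by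
        rw [LocalizedModule.mkLinearMap_apply, LocalizedModule.mk_smul_mk, one_smul, mul_one]
      rw [hx]
      exact Submodule.smul_mem _ _ (h m)
  obtain ⟨ω, hω⟩ := hω
  have key : ∀ x ∈ 𝔭 • (⊤ : Submodule S M), f x ∈ N := by
    intro x hx
    refine Submodule.smul_induction_on hx ?_ ?_
    · intro p hp m _
      rw [map_smul, ← algebraMap_smul R p (f m)]
      exact Submodule.smul_mem_smul (Ideal.mem_map_of_mem _ hp) trivial
    · intro a b ha hb
      rw [map_add]; exact N.add_mem ha hb
  refine ⟨ω, ?_, ?_⟩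
  · intro h
    rw [Submodule.span_singleton_eq_bot] at h
    apply hω
    rw [h, map_zero]
    exact N.zero_mem
  · apply le_antisymm
    · rintro x ⟨hx1, hx2⟩
      obtain ⟨s, rfl⟩ := Submodule.mem_span_singleton.mp hx1
      by_cases hs : s ∈ 𝔭
      · exact Submodule.smul_mem_smul hs (Submodule.mem_span_singleton_self ω)
      · exfalso
        have hfx : f (s • ω) ∈ N := key _ hx2
        rw [map_smul, ← algebraMap_smul R s (f ω)] at hfx
        have hu : IsUnit (algebraMap S R s) :=
          IsLocalization.map_units R (⟨s, hs⟩ : 𝔭.primeCompl)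
        apply hω
        have := N.smul_mem ((hu.unit⁻¹ : Rˣ) : R) hfx
        rwa [smul_smul, IsUnit.val_inv_mul, one_smul] at this
    · exact le_inf Submodule.smul_le_right (Submodule.smul_mono le_rfl le_top)
end

section
/- Let S be a commutative Noetherian ring, M a finitely generated S-module, and 𝔭 a prime ideal of S. Then there exist t ≥ 0 and a chain of S-submodules 0 = N₀ ⊊ N₁ ⊊ ⋯ ⊊ N_t ⊆ M such that: (a) for each i = 1,…,t, the submodule N_{i−1} is 𝔭-closed in N_i, and each N_i (including N_t) is 𝔭-closed in M; (b) for each i = 1,…,t, the quotient N_i/N_{i−1} is a nonzero cyclic S-module; and (c) the localization (M/N_t)_𝔭 is zero. -/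
/-!
Pick generators `g` of `M` and, among their images in `M/𝔭M`, a maximal `S/𝔭`-linearly
independent subfamily `x₁, …, x_t`, and let `N_i` be the span of `x₁, …, x_i`. Independence modulo
`𝔭M` makes every `N_i` `𝔭`-closed in `M` and every inclusion `N_{i-1} ⊂ N_i` strict. By
maximality each generator has a multiple by an element outside `𝔭` lying in `N_t + 𝔭M`, so the
localization of `(M/N_t)/𝔭(M/N_t)` at `𝔭` vanishes, and Nakayama's lemma gives `(M/N_t)_𝔭 = 0`.
-/

open Submodule

section

variable {S M : Type*} [CommRing S] [AddCommGroup M] [Module S M]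

theorem mkQ_mem_span_mkQ_image_iff (I : Ideal S) {T : Set M} {m : M} :
    (I • ⊤ : Submodule S M).mkQ m ∈ span (S ⧸ I) ((I • ⊤ : Submodule S M).mkQ '' T) ↔
      m ∈ I • ⊤ ⊔ span S T := by
  rw [← restrictScalars_mem S, restrictScalars_span S _ Ideal.Quotient.mk_surjective, span_image,
    ← mem_comap, comap_map_mkQ]

theorem span_image_inf_smul_top_eq {ι : Type*} (I : Ideal S) {x : ι → M} {s : Set ι}
    (hx : LinearIndepOn (S ⧸ I) ((I • ⊤ : Submodule S M).mkQ ∘ x) s) :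
    span S (x '' s) ⊓ I • ⊤ = I • span S (x '' s) := by
  refine le_antisymm ?_ (le_inf smul_le_right (smul_mono_right _ le_top))
  rintro m ⟨hm, hmI⟩
  obtain ⟨l, hl, rfl⟩ := (Finsupp.mem_span_image_iff_linearCombination S).1 hm
  have hlI : ∀ j, l j ∈ I := by
    have hmk : Finsupp.linearCombination (S ⧸ I) ((I • ⊤ : Submodule S M).mkQ ∘ x)
        (l.mapRange (Ideal.Quotient.mk I) (map_zero _)) =
        (I • ⊤ : Submodule S M).mkQ (Finsupp.linearCombination S x l) := by
      simp [Finsupp.linearCombination_apply, Finsupp.sum_mapRange_index, map_finsuppSum]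
    have hl0 := linearIndepOn_iff.1 hx _ ((Finsupp.mem_supported _ _).2 fun j hj =>
      (Finsupp.mem_supported _ _).1 hl (Finsupp.support_mapRange hj))
      (hmk.trans ((Quotient.mk_eq_zero _).2 hmI))
    intro j
    simpa [Ideal.Quotient.eq_zero_iff_mem] using DFunLike.congr_fun hl0 j
  rw [Finsupp.linearCombination_apply]
  exact sum_mem fun j hj => smul_mem_smul (hlI j) (subset_span ⟨j, hl hj, rfl⟩)

theorem inf_smul_eq_of_inf_smul_top_eq {I : Ideal S} {N P : Submodule S M} (hNP : N ≤ P)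
    (hN : N ⊓ I • ⊤ = I • N) : N ⊓ I • P = I • N :=
  le_antisymm (hN ▸ inf_le_inf_left _ (smul_mono_right _ le_top))
    (le_inf smul_le_right (smul_mono_right _ hNP))

theorem exists_fin_linearIndependent_mkQ_and_smul_mem {ι : Type*} [Finite ι] {I : Ideal S}
    (hI : I ≠ ⊤) (g : ι → M) :
    ∃ (t : ℕ) (x : Fin t → M), LinearIndependent (S ⧸ I) ((I • ⊤ : Submodule S M).mkQ ∘ x) ∧
      ∀ i, ∃ a ∉ I, a • g i ∈ I • ⊤ ⊔ span S (Set.range x) := by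
  obtain ⟨s, hs, hmax⟩ := exists_maximal_linearIndepOn (S ⧸ I) ((I • ⊤ : Submodule S M).mkQ ∘ g)
  have : Fintype s := Fintype.ofFinite s
  let e := (Fintype.equivFin s).symm
  refine ⟨Fintype.card s, g ∘ Subtype.val ∘ e, hs.comp e e.injective, fun i => ?_⟩
  have hrange : Set.range (g ∘ Subtype.val ∘ e) = g '' s := by
    rw [Set.range_comp, Set.range_comp, e.range_eq_univ, Set.image_univ, Subtype.range_coe]
  rw [hrange]
  by_cases hi : i ∈ s
  · refine ⟨1, (Ideal.ne_top_iff_one I).1 hI, ?_⟩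
    rw [one_smul]
    exact mem_sup_right (subset_span ⟨i, hi, rfl⟩)
  · obtain ⟨a, ha, hag⟩ := hmax i hi
    obtain ⟨a, rfl⟩ := Ideal.Quotient.mk_surjective a
    refine ⟨a, fun h => ha (Ideal.Quotient.eq_zero_iff_mem.2 h), ?_⟩
    rw [← mkQ_mem_span_mkQ_image_iff, ← Set.image_comp]
    exact hag

-- Nakayama's lemma enters through `Supp (M/𝔭M) = Supp M ∩ V(𝔭)`.
theorem subsingleton_localizedModule_of_span_eq_top (p : Ideal S) [p.IsPrime] [Module.Finite S M]
    {T : Set M} (hT : span S T = ⊤) (h : ∀ m ∈ T, ∃ a ∉ p, a • m ∈ p • (⊤ : Submodule S M)) :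
    Subsingleton (LocalizedModule p.primeCompl M) := by
  let P : PrimeSpectrum S := ⟨p, ‹_›⟩
  have hquot : P ∉ Module.support S (M ⧸ p • (⊤ : Submodule S M)) := by
    rw [Module.mem_support_iff_of_span_eq_top (s := (p • ⊤ : Submodule S M).mkQ '' T)
      (by rw [span_image, hT, Submodule.map_top, range_mkQ])]
    rintro ⟨_, ⟨m, hm, rfl⟩, hann⟩
    obtain ⟨a, ha, ham⟩ := h m hm
    exact ha (hann ((mem_annihilator_span_singleton _ _).2 ((Quotient.mk_eq_zero _).2 ham)))
  rw [Module.support_quotient, Set.mem_inter_iff, not_and] at hquot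
  exact Module.notMem_support_iff.1 fun hP => hquot hP (by simp [P])

theorem smul_top_sup_le_comap_mkQ (I : Ideal S) (N : Submodule S M) :
    I • ⊤ ⊔ N ≤ (I • ⊤ : Submodule S (M ⧸ N)).comap N.mkQ := by
  refine sup_le (map_le_iff_le_comap.1 ?_) fun n hn => ?_
  · rw [map_smul'']
    exact smul_mono_right _ le_top
  · simp [(Quotient.mk_eq_zero N).2 hn]

theorem subsingleton_localizedModule_quotient {ι : Type*} (p : Ideal S) [p.IsPrime]
    [Module.Finite S M] {g : ι → M} (hg : span S (Set.range g) = ⊤) {N : Submodule S M}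
    (h : ∀ i, ∃ a ∉ p, a • g i ∈ p • ⊤ ⊔ N) :
    Subsingleton (LocalizedModule p.primeCompl (M ⧸ N)) := by
  refine subsingleton_localizedModule_of_span_eq_top p (T := Set.range (N.mkQ ∘ g))
    (by rw [Set.range_comp, span_image, hg, Submodule.map_top, range_mkQ]) ?_
  rintro _ ⟨i, rfl⟩
  obtain ⟨a, ha, hag⟩ := h i
  exact ⟨a, ha, smul_top_sup_le_comap_mkQ p N hag⟩

variable (S) in
def prefixSpan {t : ℕ} (x : Fin t → M) (i : Fin (t + 1)) : Submodule S M :=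
  span S (x '' {j | j.castSucc < i})

section prefixSpan

variable {t : ℕ} (x : Fin t → M)

theorem prefixSpan_zero : prefixSpan S x 0 = ⊥ := by
  simp [prefixSpan]

theorem prefixSpan_last : prefixSpan S x (Fin.last t) = span S (Set.range x) := by
  simp [prefixSpan, Fin.castSucc_lt_last]

theorem prefixSpan_succ (i : Fin t) :
    prefixSpan S x i.succ = prefixSpan S x i.castSucc ⊔ span S {x i} := by
  have : {j : Fin t | j.castSucc < i.succ} = insert i {j | j.castSucc < i.castSucc} := by
    ext j
    simp [Fin.castSucc_lt_succ_iff, le_iff_eq_or_lt]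
  rw [prefixSpan, this, Set.image_insert_eq, span_insert, sup_comm]
  rfl

theorem prefixSpan_inf_smul_top {I : Ideal S}
    (hx : LinearIndependent (S ⧸ I) ((I • ⊤ : Submodule S M).mkQ ∘ x)) (i : Fin (t + 1)) :
    prefixSpan S x i ⊓ I • ⊤ = I • prefixSpan S x i :=
  span_image_inf_smul_top_eq I (hx.linearIndepOn _)

theorem prefixSpan_castSucc_lt_succ {I : Ideal S}
    (hx : LinearIndependent (S ⧸ I) ((I • ⊤ : Submodule S M).mkQ ∘ x)) (hI : I ≠ ⊤) (i : Fin t) :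
    prefixSpan S x i.castSucc < prefixSpan S x i.succ := by
  have : Nontrivial (S ⧸ I) := Ideal.Quotient.nontrivial_iff.2 hI
  rw [prefixSpan_succ, left_lt_sup, span_singleton_le_iff_mem]
  intro hxi
  refine hx.notMem_span_image (s := {j | j.castSucc < i.castSucc}) (lt_irrefl i.castSucc) ?_
  rw [Set.image_comp, Function.comp_apply, mkQ_mem_span_mkQ_image_iff]
  exact mem_sup_right hxi

end prefixSpan

end

theorem exists_prime_series_general {S : Type*} [CommRing S]
    {M : Type*} [AddCommGroup M] [Module S M] [Module.Finite S M]
    (𝔭 : Ideal S) [𝔭.IsPrime] :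
    ∃ (t : ℕ) (N : Fin (t + 1) → Submodule S M),
      N 0 = ⊥ ∧
      (∀ i : Fin t, N i.castSucc < N i.succ) ∧
      (∀ i : Fin t, N i.castSucc ⊓ 𝔭 • N i.succ = 𝔭 • N i.castSucc) ∧
      (∀ i : Fin (t + 1), N i ⊓ 𝔭 • (⊤ : Submodule S M) = 𝔭 • N i) ∧
      (∀ i : Fin t, ∃ x : M, N i.succ = N i.castSucc ⊔ Submodule.span S {x}) ∧
      Subsingleton (LocalizedModule 𝔭.primeCompl (M ⧸ N (Fin.last t))) := by
  have h𝔭 : 𝔭 ≠ ⊤ := Ideal.IsPrime.ne_top ‹_›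
  obtain ⟨n, g, hg⟩ := Module.Finite.exists_fin (R := S) (M := M)
  obtain ⟨t, x, hx, hgx⟩ := exists_fin_linearIndependent_mkQ_and_smul_mem h𝔭 g
  have hlt := prefixSpan_castSucc_lt_succ x hx h𝔭
  have hclosed := prefixSpan_inf_smul_top x hx
  refine ⟨t, prefixSpan S x, prefixSpan_zero x, hlt,
    fun i => inf_smul_eq_of_inf_smul_top_eq (hlt i).le (hclosed _), hclosed,
    fun i => ⟨x i, prefixSpan_succ x i⟩, ?_⟩
  rw [prefixSpan_last]
  exact subsingleton_localizedModule_quotient 𝔭 hg hgx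

/-- Let `S` be a commutative Noetherian ring, `M` a finitely
generated `S`-module and `𝔭` a prime ideal of `S`.  Then there is a chain of
submodules `0 = N₀ ⊊ N₁ ⊊ ⋯ ⊊ N_t ⊆ M` (a `𝔭`-series) such that:
(a) each `N_{i-1}` is `𝔭`-closed in `N_i` (`N_{i-1} ⊓ 𝔭•N_i = 𝔭•N_{i-1}`) and each
`N_i` (including `N_t`) is `𝔭`-closed in `M`;
(b) each quotient `N_i/N_{i-1}` is a nonzero cyclic `S`-module, i.e.
`N_{i-1} < N_i` and `N_i = N_{i-1} ⊔ S·x` for some `x`;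
(c) the localization `(M/N_t)_𝔭` is zero. -/
theorem exists_prime_series {S : Type*} [CommRing S] [IsNoetherianRing S]
    {M : Type*} [AddCommGroup M] [Module S M] [Module.Finite S M]
    (𝔭 : Ideal S) [𝔭.IsPrime] :
    ∃ (t : ℕ) (N : Fin (t + 1) → Submodule S M),
      N 0 = ⊥ ∧
      (∀ i : Fin t, N i.castSucc < N i.succ) ∧
      (∀ i : Fin t, N i.castSucc ⊓ 𝔭 • N i.succ = 𝔭 • N i.castSucc) ∧
      (∀ i : Fin (t + 1), N i ⊓ 𝔭 • (⊤ : Submodule S M) = 𝔭 • N i) ∧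
      (∀ i : Fin t, ∃ x : M, N i.succ = N i.castSucc ⊔ Submodule.span S {x}) ∧
      Subsingleton (LocalizedModule 𝔭.primeCompl (M ⧸ N (Fin.last t))) :=
  exists_prime_series_general 𝔭
end

section
/- Let A be a commutative normed ring, and let M and N be normed A-modules (so ‖a•m‖ ≤ ‖a‖·‖m‖) whose norms are nonarchimedean, and suppose both M and N admit pseudo-Cartesian systems of generators. Then every surjective continuous A-linear map φ: M → N is strict; more precisely, there exists a constant D > 0 such that every ν ∈ N has a preimage μ ∈ M with φ(μ) = ν and ‖μ‖ ≤ D·‖ν‖. -/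
/-! Lift each pseudo-Cartesian generator `gᵢ` of `N` to some `mᵢ ∈ M` with `‖mᵢ‖ ≤ c‖gᵢ‖`
(possible for finitely many generators, choosing `mᵢ = 0` when `gᵢ = 0`). Writing
`ν = ∑ bᵢ • gᵢ` with `‖ν‖ = maxᵢ ‖bᵢ‖‖gᵢ‖`, the ultrametric inequality in `M` bounds the lift
`∑ bᵢ • mᵢ` by `maxᵢ ‖bᵢ‖‖mᵢ‖ ≤ c‖ν‖`. -/

/-- A normed `A`-module `M` has a *pseudo-Cartesian* system of generators
`μ₁, …, μ_s` if every `m ∈ M` can be written `m = a₁μ₁ + ⋯ + a_sμ_s` with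
`‖m‖ = max_i ‖a_i‖·‖μ_i‖`. -/
def HasPseudoCartesianGenerators (A : Type*) (M : Type*) [NormedCommRing A]
    [NormedAddCommGroup M] [Module A M] : Prop :=
  ∃ (s : ℕ) (μ : Fin s → M), ∀ m : M, ∃ a : Fin s → A,
    m = ∑ i, a i • μ i ∧ ‖m‖₊ = Finset.univ.sup fun i => ‖a i‖₊ * ‖μ i‖₊

open Finset

lemma Function.Surjective.exists_lifts_norm_le_mul {M N ι : Type*} [SeminormedAddGroup M]
    [NormedAddGroup N] [Fintype ι] {φ : M → N} (hφ : Function.Surjective φ) (hφ0 : φ 0 = 0)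
    (g : ι → N) : ∃ c : ℝ, 0 ≤ c ∧ ∃ m : ι → M, ∀ i, φ (m i) = g i ∧ ‖m i‖ ≤ c * ‖g i‖ := by
  have hlift : ∀ i, ∃ x : M, φ x = g i ∧ (g i = 0 → x = 0) := fun i => by
    by_cases hg : g i = 0
    · exact ⟨0, hφ0.trans hg.symm, fun _ => rfl⟩
    · obtain ⟨x, hx⟩ := hφ (g i)
      exact ⟨x, hx, fun h => absurd h hg⟩
  choose m hmφ hm0 using hlift
  refine ⟨∑ i, ‖m i‖ / ‖g i‖, by positivity, m, fun i => ⟨hmφ i, ?_⟩⟩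
  by_cases hg : g i = 0
  · simp [hm0 i hg, hg]
  · calc ‖m i‖ = ‖m i‖ / ‖g i‖ * ‖g i‖ := (div_mul_cancel₀ _ (norm_ne_zero_iff.2 hg)).symm
      _ ≤ (∑ j, ‖m j‖ / ‖g j‖) * ‖g i‖ := by
        gcongr
        exact single_le_sum (f := fun j => ‖m j‖ / ‖g j‖) (fun _ _ => by positivity) (mem_univ i)

lemma norm_sum_smul_le_mul_of_norm_le_mul {A M N ι : Type*} [SeminormedRing A]
    [SeminormedAddCommGroup M] [IsUltrametricDist M] [Module A M] [IsBoundedSMul A M] [Norm N]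
    {s : Finset ι} {b : ι → A} {m : ι → M} {g : ι → N} {c r : ℝ} (hc : 0 ≤ c) (hr : 0 ≤ r)
    (hm : ∀ i ∈ s, ‖m i‖ ≤ c * ‖g i‖) (hb : ∀ i ∈ s, ‖b i‖ * ‖g i‖ ≤ r) :
    ‖∑ i ∈ s, b i • m i‖ ≤ c * r := by
  refine IsUltrametricDist.norm_sum_le_of_forall_le_of_nonneg (by positivity) fun i hi => ?_
  calc ‖b i • m i‖ ≤ ‖b i‖ * ‖m i‖ := norm_smul_le _ _
    _ ≤ ‖b i‖ * (c * ‖g i‖) := by gcongr; exact hm i hi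
    _ = c * (‖b i‖ * ‖g i‖) := by ring
    _ ≤ c * r := by gcongr; exact hb i hi

lemma norm_mul_norm_le_of_nnnorm_eq_sup {A M ι : Type*} [SeminormedAddGroup A] [SeminormedAddGroup M]
    [Fintype ι] {g : ι → M} {b : ι → A} {ν : M}
    (hν : ‖ν‖₊ = univ.sup fun i => ‖b i‖₊ * ‖g i‖₊) (i : ι) : ‖b i‖ * ‖g i‖ ≤ ‖ν‖ := by
  have : ‖b i‖₊ * ‖g i‖₊ ≤ ‖ν‖₊ := hν ▸ le_sup (f := fun i => ‖b i‖₊ * ‖g i‖₊) (mem_univ i)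
  exact_mod_cast this

theorem surjective_linear_of_pseudoCartesian_isStrict_general {A : Type*}
    [NormedCommRing A] {M N : Type*} [NormedAddCommGroup M]
    [NormedAddCommGroup N] [Module A M] [Module A N] [IsBoundedSMul A M]
    (hnaM : ∀ x y : M, ‖x + y‖ ≤ max ‖x‖ ‖y‖)
    (hN : HasPseudoCartesianGenerators A N)
    (φ : M →ₗ[A] N) (hφs : Function.Surjective φ) :
    ∃ D : ℝ, 0 < D ∧ ∀ ν : N, ∃ μ : M, φ μ = ν ∧ ‖μ‖ ≤ D * ‖ν‖ := by
  have := IsUltrametricDist.isUltrametricDist_of_forall_norm_add_le_max_norm hnaM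
  obtain ⟨s, g, hg⟩ := hN
  obtain ⟨c, hc, m, hm⟩ := hφs.exists_lifts_norm_le_mul (map_zero φ) g
  refine ⟨c + 1, by positivity, fun ν => ?_⟩
  obtain ⟨b, hνb, hν⟩ := hg ν
  refine ⟨∑ i, b i • m i, by simp [hνb, hm], ?_⟩
  calc ‖∑ i, b i • m i‖ ≤ c * ‖ν‖ :=
        norm_sum_smul_le_mul_of_norm_le_mul hc (norm_nonneg ν) (fun i _ => (hm i).2)
          (fun i _ => norm_mul_norm_le_of_nnnorm_eq_sup hν i)
    _ ≤ (c + 1) * ‖ν‖ := by gcongr; linarith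

/-- Let `A` be a commutative normed ring, and `M`, `N` normed
`A`-modules with nonarchimedean norms, both admitting pseudo-Cartesian systems
of generators.  Then every surjective continuous `A`-linear map `φ : M → N` is
strict; precisely, there is a constant `D > 0` such that every `ν ∈ N` has a
preimage `μ ∈ M` with `φ μ = ν` and `‖μ‖ ≤ D·‖ν‖`. -/
theorem surjective_linear_of_pseudoCartesian_isStrict {A : Type*}
    [NormedCommRing A] {M N : Type*} [NormedAddCommGroup M]
    [NormedAddCommGroup N] [Module A M] [Module A N] [IsBoundedSMul A M]
    [IsBoundedSMul A N]
    (hnaM : ∀ x y : M, ‖x + y‖ ≤ max ‖x‖ ‖y‖)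
    (hnaN : ∀ x y : N, ‖x + y‖ ≤ max ‖x‖ ‖y‖)
    (hM : HasPseudoCartesianGenerators A M)
    (hN : HasPseudoCartesianGenerators A N)
    (φ : M →ₗ[A] N) (hφc : Continuous φ) (hφs : Function.Surjective φ) :
    ∃ D : ℝ, 0 < D ∧ ∀ ν : N, ∃ μ : M, φ μ = ν ∧ ‖μ‖ ≤ D * ‖ν‖ :=
  surjective_linear_of_pseudoCartesian_isStrict_general hnaM hN φ hφs
end

section
/- Let A be a commutative normed ring, fix n ≥ 1, and let F = {(a_i)_{i∈ℕⁿ} : a_i ∈ A, ‖a_i‖ → 0 along the cofinite filter} with the supremum norm be the underlying normed A-module of the Tate algebra A⟨T₁,…,Tₙ⟩. Let M be a complete normed A-module whose norm is nonarchimedean, N a normed A-module, ε: M → N a continuous bounded surjective A-linear map which is strict (every norm-bounded family in N is the image under ε of a norm-bounded family in M), and θ: F → N a continuous bounded A-linear map. Then there exists a continuous bounded A-linear map σ: F → M with ε ∘ σ = θ. In other words, A⟨T₁,…,Tₙ⟩ is an analytically projective A-module. -/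
/-!
Let `δᵢ = single i` be the unit vectors and `ν i = θ δᵢ`. Then strictness of `ε` lifts the bounded
family `ν` to a bounded family `μ` in `M`. Because `M` is complete and nonarchimedean, the series
`σ f = ∑ᵢ f i • μ i` converges for every `f` vanishing at infinity and satisfies
`‖σ f‖ ≤ (sup ‖μ i‖) ‖f‖`. Since every `f` is the sum of the series `∑ᵢ f i • δᵢ`, the continuous
maps `ε ∘ σ` and `θ` agree as soon as they agree on the `δᵢ`, where both give `ν i`.
-/

open ZeroAtInfty Filter Topology

namespace ZeroAtInftyContinuousMap

section Coe

variable {α β : Type*} [TopologicalSpace α] [TopologicalSpace β] [AddCommMonoid β]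
  [ContinuousAdd β]

theorem coe_sum {κ : Type*} (s : Finset κ) (g : κ → C₀(α, β)) :
    ⇑(∑ k ∈ s, g k) = ∑ k ∈ s, ⇑(g k) :=
  map_sum (⟨⟨DFunLike.coe, coe_zero⟩, coe_add⟩ : C₀(α, β) →+ (α → β)) g s

end Coe

variable {ι A : Type*} [TopologicalSpace ι] [NormedRing A]

theorem norm_apply_le (f : C₀(ι, A)) (x : ι) : ‖f x‖ ≤ ‖f‖ :=
  f.toBCF.norm_coe_le_norm x

theorem norm_le_of_forall {f : C₀(ι, A)} {C : ℝ} (hC : 0 ≤ C) (h : ∀ x, ‖f x‖ ≤ C) :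
    ‖f‖ ≤ C :=
  norm_toBCF_eq_norm (f := f) ▸ (BoundedContinuousFunction.norm_le hC).mpr h

variable {M : Type*} [NormedAddCommGroup M] [Module A M] [IsBoundedSMul A M]
  [IsUltrametricDist M] {μ : ι → M} {C : ℝ}

theorem norm_tsum_smul_le (hμ : ∀ i, ‖μ i‖ ≤ C) (f : C₀(ι, A)) :
    ‖∑' i, f i • μ i‖ ≤ C * ‖f‖ := by
  rcases isEmpty_or_nonempty ι with hι | hι
  · rw [show f = 0 from ext fun x => isEmptyElim x]
    simp
  · refine IsUltrametricDist.norm_tsum_le_of_forall_le fun i => ?_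
    calc ‖f i • μ i‖ ≤ ‖f i‖ * ‖μ i‖ := norm_smul_le _ _
      _ ≤ ‖f‖ * C := mul_le_mul (f.norm_apply_le i) (hμ i) (norm_nonneg _) (norm_nonneg _)
      _ = C * ‖f‖ := mul_comm _ _

variable [DiscreteTopology ι] [CompleteSpace M]

theorem tendsto_cofinite (f : C₀(ι, A)) : Tendsto f cofinite (𝓝 0) :=
  cocompact_eq_cofinite ι ▸ f.zero_at_infty'

theorem summable_smul (hμ : ∀ i, ‖μ i‖ ≤ C) (f : C₀(ι, A)) : Summable fun i => f i • μ i := by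
  refine NonarchimedeanAddGroup.summable_of_tendsto_cofinite_zero <|
    squeeze_zero_norm (fun i => (norm_smul_le (f i) (μ i)).trans ?_)
      (by simpa using f.tendsto_cofinite.norm.mul_const C)
  gcongr
  exact hμ i

noncomputable def lift (μ : ι → M) (hμ : ∀ i, ‖μ i‖ ≤ C) : C₀(ι, A) →L[A] M :=
  LinearMap.mkContinuous
    { toFun := fun f => ∑' i, f i • μ i
      map_add' := fun f g => by
        simp only [coe_add, Pi.add_apply, add_smul]
        exact (summable_smul hμ f).tsum_add (summable_smul hμ g)
      map_smul' := fun a f => by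
        simp only [coe_smul, Pi.smul_apply, smul_eq_mul, mul_smul, RingHom.id_apply]
        exact (summable_smul hμ f).tsum_const_smul a }
    C (norm_tsum_smul_le hμ)

theorem lift_apply (hμ : ∀ i, ‖μ i‖ ≤ C) (f : C₀(ι, A)) :
    lift μ hμ f = ∑' i, f i • μ i :=
  rfl

theorem norm_lift_apply_le (hμ : ∀ i, ‖μ i‖ ≤ C) (f : C₀(ι, A)) :
    ‖lift μ hμ f‖ ≤ C * ‖f‖ :=
  norm_tsum_smul_le hμ f

variable [DecidableEq ι]

noncomputable def single (i : ι) : C₀(ι, A) where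
  toFun := Pi.single i 1
  continuous_toFun := continuous_of_discreteTopology
  zero_at_infty' := by
    rw [cocompact_eq_cofinite]
    refine tendsto_const_nhds.congr' ?_
    filter_upwards [(Set.finite_singleton i).eventually_cofinite_notMem] with x hx
    exact (Pi.single_eq_of_ne (M := fun _ => A) (by simpa using hx) 1).symm

@[simp]
theorem single_apply (i x : ι) : (single i : C₀(ι, A)) x = if x = i then 1 else 0 :=
  Pi.single_apply i 1 x

theorem norm_single_le (i : ι) : ‖(single i : C₀(ι, A))‖ ≤ ‖(1 : A)‖ :=
  norm_le_of_forall (norm_nonneg _) fun x => by by_cases h : x = i <;> simp [h]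

theorem sum_smul_single_apply (f : C₀(ι, A)) (s : Finset ι) (x : ι) :
    (∑ i ∈ s, f i • single i) x = if x ∈ s then f x else 0 := by
  simp [coe_sum, Finset.sum_apply, eq_comm (a := x)]

theorem hasSum_smul_single (f : C₀(ι, A)) : HasSum (fun i => f i • single i) f := by
  rw [HasSum, SummationFilter.unconditional_filter, Metric.tendsto_atTop]
  intro δ hδ
  have hfin : {x | δ / 2 ≤ ‖f x‖}.Finite := by
    simpa [Filter.eventually_cofinite, dist_zero_right] using
      f.tendsto_cofinite.eventually (Metric.ball_mem_nhds 0 (half_pos hδ))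
  refine ⟨hfin.toFinset, fun s hs => ?_⟩
  have hcoord : ∀ x, ‖(∑ i ∈ s, f i • single i - f : C₀(ι, A)) x‖ ≤ δ / 2 := by
    intro x
    rw [coe_sub, Pi.sub_apply, sum_smul_single_apply]
    by_cases hx : x ∈ s
    · simpa [hx] using (half_pos hδ).le
    · have : x ∉ hfin.toFinset := fun h => hx (hs h)
      simpa [hx] using (not_le.mp (by simpa using this)).le
  calc dist (∑ i ∈ s, f i • single i) f ≤ δ / 2 :=
        dist_eq_norm (E := C₀(ι, A)) _ _ ▸ norm_le_of_forall (half_pos hδ).le hcoord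
    _ < δ := half_lt_self hδ

@[ext]
theorem continuousLinearMap_ext {E : Type*} [AddCommMonoid E] [Module A E] [TopologicalSpace E]
    [T2Space E] {φ ψ : C₀(ι, A) →L[A] E} (h : ∀ i, φ (single i) = ψ (single i)) : φ = ψ := by
  ext f
  refine ((hasSum_smul_single f).mapL φ).unique ?_
  simpa only [map_smul, h] using (hasSum_smul_single f).mapL ψ

theorem norm_map_single_le {E : Type*} [SeminormedAddCommGroup E] {g : C₀(ι, A) → E} {C : ℝ}
    (hg : ∀ f, ‖g f‖ ≤ C * ‖f‖) (i : ι) : ‖g (single i)‖ ≤ |C| * ‖(1 : A)‖ :=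
  calc ‖g (single i)‖ ≤ C * ‖(single i : C₀(ι, A))‖ := hg _
    _ ≤ |C| * ‖(single i : C₀(ι, A))‖ := by gcongr; exact le_abs_self C
    _ ≤ |C| * ‖(1 : A)‖ := by gcongr; exact norm_single_le i

@[simp]
theorem lift_single (hμ : ∀ i, ‖μ i‖ ≤ C) (j : ι) : lift μ hμ (single j : C₀(ι, A)) = μ j := by
  simp [lift_apply, ite_smul]

end ZeroAtInftyContinuousMap

open ZeroAtInftyContinuousMap in
theorem tateAlgebra_analyticallyProjective_general {A : Type*} [NormedCommRing A]
    (n : ℕ)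
    {M N : Type*} [NormedAddCommGroup M] [Module A M] [IsBoundedSMul A M]
    [CompleteSpace M] [NormedAddCommGroup N] [Module A N]
    (hnaM : ∀ x y : M, ‖x + y‖ ≤ max ‖x‖ ‖y‖)
    (ε : M →ₗ[A] N) (hεc : Continuous ε)
    (hstrict : ∀ (κ : Type) (ν : κ → N), (∃ C : ℝ, ∀ k, ‖ν k‖ ≤ C) →
      ∃ μ : κ → M, (∀ k, ε (μ k) = ν k) ∧ ∃ C : ℝ, ∀ k, ‖μ k‖ ≤ C)
    (θ : C₀(Fin n → ℕ, A) →ₗ[A] N) (hθc : Continuous θ)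
    (hθb : ∃ C : ℝ, ∀ f : C₀(Fin n → ℕ, A), ‖θ f‖ ≤ C * ‖f‖) :
    ∃ σ : C₀(Fin n → ℕ, A) →ₗ[A] M, Continuous σ ∧
      (∃ C : ℝ, ∀ f : C₀(Fin n → ℕ, A), ‖σ f‖ ≤ C * ‖f‖) ∧
      ε ∘ₗ σ = θ := by
  have : IsUltrametricDist M :=
    IsUltrametricDist.isUltrametricDist_of_forall_norm_add_le_max_norm hnaM
  obtain ⟨Cθ, hCθ⟩ := hθb
  obtain ⟨μ, hεμ, C, hμ⟩ :=
    hstrict _ (fun i => θ (single i)) ⟨_, norm_map_single_le hCθ⟩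
  let σ : C₀(Fin n → ℕ, A) →L[A] M := lift μ hμ
  refine ⟨σ, σ.continuous, ⟨C, norm_lift_apply_le hμ⟩, ?_⟩
  have hcomp : (⟨ε, hεc⟩ : M →L[A] N).comp σ = ⟨θ, hθc⟩ := by
    ext i
    simpa [σ] using hεμ i
  exact congrArg ContinuousLinearMap.toLinearMap hcomp

/-- Let `A` be a commutative normed ring, `n ≥ 1`, and let
`F = A⟨T₁,…,Tₙ⟩ = C₀(Fin n → ℕ, A)` be the underlying normed `A`-module of the
Tate algebra (families with norms tending to zero along the cofinite filter,
with the sup norm).  Let `M` be a complete normed `A`-module with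
nonarchimedean norm, `N` a normed `A`-module, `ε : M → N` a continuous bounded
surjective `A`-linear map which is strict (every norm-bounded family in `N`
lifts to a norm-bounded family in `M`), and `θ : F → N` a continuous bounded
`A`-linear map.  Then there is a continuous bounded `A`-linear map `σ : F → M`
with `ε ∘ σ = θ`: the Tate algebra is an analytically projective `A`-module. -/
theorem tateAlgebra_analyticallyProjective {A : Type*} [NormedCommRing A]
    (n : ℕ) (hn : 1 ≤ n)
    {M N : Type*} [NormedAddCommGroup M] [Module A M] [IsBoundedSMul A M]
    [CompleteSpace M] [NormedAddCommGroup N] [Module A N] [IsBoundedSMul A N]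
    (hnaM : ∀ x y : M, ‖x + y‖ ≤ max ‖x‖ ‖y‖)
    (ε : M →ₗ[A] N) (hεc : Continuous ε)
    (hεb : ∃ C : ℝ, ∀ m : M, ‖ε m‖ ≤ C * ‖m‖)
    (hεs : Function.Surjective ε)
    (hstrict : ∀ (κ : Type) (ν : κ → N), (∃ C : ℝ, ∀ k, ‖ν k‖ ≤ C) →
      ∃ μ : κ → M, (∀ k, ε (μ k) = ν k) ∧ ∃ C : ℝ, ∀ k, ‖μ k‖ ≤ C)
    (θ : C₀(Fin n → ℕ, A) →ₗ[A] N) (hθc : Continuous θ)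
    (hθb : ∃ C : ℝ, ∀ f : C₀(Fin n → ℕ, A), ‖θ f‖ ≤ C * ‖f‖) :
    ∃ σ : C₀(Fin n → ℕ, A) →ₗ[A] M, Continuous σ ∧
      (∃ C : ℝ, ∀ f : C₀(Fin n → ℕ, A), ‖σ f‖ ≤ C * ‖f‖) ∧
      ε ∘ₗ σ = θ :=
  tateAlgebra_analyticallyProjective_general n hnaM ε hεc hstrict θ hθc hθb
end

section
/- Let A be a commutative normed ring and 𝔭 a prime ideal of A. Let 0 → M₁ → M →^θ M₂ → 0 be a short exact sequence of analytic A-modules, i.e. M₁ is a submodule of M with the restricted norm and θ is a surjective morphism of analytic A-modules with kernel M₁. Suppose that M₁ is 𝔭-closed in M (M₁ ∩ 𝔭M = 𝔭M₁), that θ is strict, and that both M₁ and M₂ admit analytically projective 𝔭-representations. Then M admits an analytically projective 𝔭-representation; moreover the representing surjection π: F → M can be chosen so that π⁻¹(𝔭M) = 𝔭F. -/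
/-- An *analytic `A`-module* over a normed ring `A`: a complete normed
`A`-module (with `‖a • m‖ ≤ ‖a‖·‖m‖`). -/
structure AnalyticModule (A : Type) [NormedCommRing A] where
  carrier : Type
  [grp : NormedAddCommGroup carrier]
  [mod : Module A carrier]
  [bsmul : IsBoundedSMul A carrier]
  [compl : CompleteSpace carrier]

attribute [instance] AnalyticModule.grp AnalyticModule.mod
  AnalyticModule.bsmul AnalyticModule.compl

variable {A : Type} [NormedCommRing A]

/-- A *morphism of analytic `A`-modules* is a continuous, bounded `A`-linear
map. -/
def IsAnalyticMorphism {M N : AnalyticModule A}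
    (f : M.carrier →ₗ[A] N.carrier) : Prop :=
  Continuous f ∧ ∃ C : ℝ, ∀ m : M.carrier, ‖f m‖ ≤ C * ‖m‖

/-- A surjective morphism is *strict* if every norm-bounded family in the
target is the image of a norm-bounded family in the source. -/
def IsStrictMorphism {M N : AnalyticModule A}
    (f : M.carrier →ₗ[A] N.carrier) : Prop :=
  ∀ (κ : Type) (ν : κ → N.carrier), (∃ C : ℝ, ∀ k, ‖ν k‖ ≤ C) →
    ∃ μ : κ → M.carrier, (∀ k, f (μ k) = ν k) ∧ ∃ C : ℝ, ∀ k, ‖μ k‖ ≤ C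

/-- `P` is *analytically projective* if every morphism `θ : P → N` lifts
through every strict surjective morphism `ε : M → N`. -/
def IsAnalyticallyProjective (P : AnalyticModule A) : Prop :=
  ∀ (M N : AnalyticModule A) (ε : M.carrier →ₗ[A] N.carrier)
    (θ : P.carrier →ₗ[A] N.carrier),
    IsAnalyticMorphism ε → Function.Surjective ε → IsStrictMorphism ε →
    IsAnalyticMorphism θ →
    ∃ σ : P.carrier →ₗ[A] M.carrier, IsAnalyticMorphism σ ∧ ε ∘ₗ σ = θ

/-- An *analytically projective `𝔭`-representation* of `M`: a strict surjective
morphism `π : F → M` with `F` analytically projective and `ker π ⊆ 𝔭F`. -/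
def HasAnalyticallyProjectiveRep (𝔭 : Ideal A) (M : AnalyticModule A) : Prop :=
  ∃ (F : AnalyticModule A) (π : F.carrier →ₗ[A] M.carrier),
    IsAnalyticallyProjective F ∧ IsAnalyticMorphism π ∧
    Function.Surjective π ∧
    LinearMap.ker π ≤ 𝔭 • (⊤ : Submodule A F.carrier)

/-! Take `F = F₁ × F₂` and `π (x, y) = π₁ x + σ y`, where `σ : F₂ → M` lifts `π₂` through the
strict surjection `θ`. If `π (x, y) = 0`, then `π₂ y = θ (π (x, y)) = 0`, so `y ∈ 𝔭F₂` and
`σ y ∈ 𝔭M`; hence `π₁ x = -σ y ∈ M₁ ∩ 𝔭M = 𝔭M₁`, and `x ∈ 𝔭F₁` because `ker π₁ ⊆ 𝔭F₁`.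
For a surjection, `ker π ⊆ 𝔭F` already gives `π⁻¹(𝔭M) = 𝔭F + ker π = 𝔭F`. -/

namespace Submodule

variable {R M N : Type*} [CommRing R] [AddCommGroup M] [Module R M] [AddCommGroup N]
  [Module R N] {I : Ideal R}

theorem comap_smul_top_eq_of_ker_le {f : M →ₗ[R] N} (hf : Function.Surjective f)
    (hker : LinearMap.ker f ≤ I • ⊤) : comap f (I • ⊤) = I • ⊤ := by
  rw [comap_smul_top_of_surjective I f hf, sup_eq_left.mpr hker]

theorem comap_smul_top_le_of_inf_le {f : M →ₗ[R] N} (hf : Function.Injective f)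
    (hclosed : LinearMap.range f ⊓ I • ⊤ ≤ I • LinearMap.range f) :
    comap f (I • ⊤) ≤ I • ⊤ :=
  calc comap f (I • ⊤)
      = comap f (LinearMap.range f ⊓ I • ⊤) := by
        rw [comap_inf, LinearMap.range_le_iff_comap.mp le_rfl, top_inf_eq]
    _ ≤ comap f (I • LinearMap.range f) := comap_mono hclosed
    _ = I • ⊤ := by rw [← map_top, ← map_smul'', comap_map_eq_of_injective hf]

theorem prodMk_mem_smul_top {x : M} {y : N} (hx : x ∈ I • (⊤ : Submodule R M))
    (hy : y ∈ I • (⊤ : Submodule R N)) : (x, y) ∈ I • (⊤ : Submodule R (M × N)) := by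
  have hx' : (x, 0) ∈ I • (⊤ : Submodule R (M × N)) :=
    smul_top_le_comap_smul_top I (LinearMap.inl R M N) hx
  have hy' : (0, y) ∈ I • (⊤ : Submodule R (M × N)) :=
    smul_top_le_comap_smul_top I (LinearMap.inr R M N) hy
  simpa using add_mem hx' hy'

end Submodule

namespace LinearMap

variable {R F₁ F₂ M₁ M M₂ : Type*} [CommRing R]
  [AddCommGroup F₁] [Module R F₁] [AddCommGroup F₂] [Module R F₂]
  [AddCommGroup M₁] [Module R M₁] [AddCommGroup M] [Module R M]
  [AddCommGroup M₂] [Module R M₂] {incl : M₁ →ₗ[R] M} {θ : M →ₗ[R] M₂}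
  {π₁ : F₁ →ₗ[R] M₁} {π₂ : F₂ →ₗ[R] M₂} {σ : F₂ →ₗ[R] M}

theorem coprod_comp_surjective (hexact : ker θ ≤ range incl) (hπ₁ : Function.Surjective π₁)
    (hπ₂ : Function.Surjective π₂) (hσ : θ ∘ₗ σ = π₂) :
    Function.Surjective (coprod (incl ∘ₗ π₁) σ) := by
  intro m
  obtain ⟨y, hy⟩ := hπ₂ (θ m)
  obtain ⟨m₁, hm₁⟩ := hexact (show m - σ y ∈ ker θ by simp [← hy, ← hσ])
  obtain ⟨x, rfl⟩ := hπ₁ m₁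
  exact ⟨(x, y), by simp [hm₁]⟩

theorem ker_coprod_comp_le_smul_top {I : Ideal R} (hinj : Function.Injective incl)
    (hcomplex : range incl ≤ ker θ)
    (hclosed : range incl ⊓ I • ⊤ ≤ I • range incl)
    (hπ₁s : Function.Surjective π₁) (hπ₁k : ker π₁ ≤ I • ⊤) (hπ₂k : ker π₂ ≤ I • ⊤)
    (hσ : θ ∘ₗ σ = π₂) :
    ker (coprod (incl ∘ₗ π₁) σ) ≤ I • ⊤ := by
  rintro ⟨x, y⟩ hxy
  replace hxy : incl (π₁ x) + σ y = 0 := hxy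
  have hy : y ∈ I • (⊤ : Submodule R F₂) := by
    apply hπ₂k
    have hθincl : θ (incl (π₁ x)) = 0 := hcomplex (mem_range_self incl _)
    simpa [← hσ, hθincl] using congrArg θ hxy
  have hσy : σ y ∈ I • (⊤ : Submodule R M) := Submodule.smul_top_le_comap_smul_top I σ hy
  have hx : x ∈ I • (⊤ : Submodule R F₁) := by
    rw [← Submodule.comap_smul_top_eq_of_ker_le hπ₁s hπ₁k]
    apply Submodule.comap_smul_top_le_of_inf_le hinj hclosed
    simpa [eq_neg_of_add_eq_zero_left hxy] using hσy
  exact Submodule.prodMk_mem_smul_top hx hy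

end LinearMap

abbrev AnalyticModule.prod (P Q : AnalyticModule A) : AnalyticModule A :=
  ⟨P.carrier × Q.carrier⟩

namespace IsAnalyticMorphism

variable {P Q N : AnalyticModule A}

theorem exists_nonneg_bound {f : P.carrier →ₗ[A] Q.carrier} (hf : IsAnalyticMorphism f) :
    ∃ C, 0 ≤ C ∧ ∀ m, ‖f m‖ ≤ C * ‖m‖ := by
  obtain ⟨-, C, hC⟩ := hf
  exact ⟨max C 0, le_max_right _ _, fun m => (hC m).trans (by gcongr; exact le_max_left _ _)⟩

theorem comp {g : Q.carrier →ₗ[A] N.carrier} {f : P.carrier →ₗ[A] Q.carrier}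
    (hg : IsAnalyticMorphism g) (hf : IsAnalyticMorphism f) : IsAnalyticMorphism (g ∘ₗ f) := by
  obtain ⟨Cg, hCg0, hCg⟩ := hg.exists_nonneg_bound
  obtain ⟨Cf, -, hCf⟩ := hf.exists_nonneg_bound
  refine ⟨hg.1.comp hf.1, Cg * Cf, fun m => ?_⟩
  calc ‖g (f m)‖ ≤ Cg * ‖f m‖ := hCg _
    _ ≤ Cg * (Cf * ‖m‖) := by gcongr; exact hCf m
    _ = Cg * Cf * ‖m‖ := by ring

theorem of_norm_map_eq {f : P.carrier →ₗ[A] Q.carrier} (hf : ∀ x, ‖f x‖ = ‖x‖) :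
    IsAnalyticMorphism f :=
  ⟨(AddMonoidHomClass.isometry_of_norm f hf).continuous, 1, fun m => by rw [hf, one_mul]⟩

theorem inl : IsAnalyticMorphism (N := P.prod Q) (LinearMap.inl A P.carrier Q.carrier) :=
  of_norm_map_eq fun m => by simp [Prod.norm_def]

theorem inr : IsAnalyticMorphism (N := P.prod Q) (LinearMap.inr A P.carrier Q.carrier) :=
  of_norm_map_eq fun m => by simp [Prod.norm_def]

theorem coprod {f : P.carrier →ₗ[A] N.carrier} {g : Q.carrier →ₗ[A] N.carrier}
    (hf : IsAnalyticMorphism f) (hg : IsAnalyticMorphism g) :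
    IsAnalyticMorphism (M := P.prod Q) (LinearMap.coprod f g) := by
  obtain ⟨Cf, hCf0, hCf⟩ := hf.exists_nonneg_bound
  obtain ⟨Cg, hCg0, hCg⟩ := hg.exists_nonneg_bound
  refine ⟨(hf.1.comp continuous_fst).add (hg.1.comp continuous_snd), Cf + Cg, fun m => ?_⟩
  calc ‖f m.1 + g m.2‖ ≤ ‖f m.1‖ + ‖g m.2‖ := norm_add_le _ _
    _ ≤ Cf * ‖m.1‖ + Cg * ‖m.2‖ := add_le_add (hCf _) (hCg _)
    _ ≤ Cf * ‖m‖ + Cg * ‖m‖ := by gcongr; exacts [norm_fst_le m, norm_snd_le m]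
    _ = (Cf + Cg) * ‖m‖ := by ring

end IsAnalyticMorphism

theorem IsAnalyticallyProjective.prod {P Q : AnalyticModule A}
    (hP : IsAnalyticallyProjective P) (hQ : IsAnalyticallyProjective Q) :
    IsAnalyticallyProjective (P.prod Q) := by
  intro M N ε θ hεm hεs hεstrict hθm
  obtain ⟨σ₁, hσ₁m, hσ₁⟩ := hP M N ε _ hεm hεs hεstrict (hθm.comp IsAnalyticMorphism.inl)
  obtain ⟨σ₂, hσ₂m, hσ₂⟩ := hQ M N ε _ hεm hεs hεstrict (hθm.comp IsAnalyticMorphism.inr)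
  refine ⟨LinearMap.coprod σ₁ σ₂, hσ₁m.coprod hσ₂m, LinearMap.prod_ext ?_ ?_⟩
  · rw [LinearMap.comp_assoc, LinearMap.coprod_inl, hσ₁]
  · rw [LinearMap.comp_assoc, LinearMap.coprod_inr, hσ₂]

theorem hasAnalyticallyProjectiveRep_of_ses_general (𝔭 : Ideal A)
    (M M₁ M₂ : AnalyticModule A)
    (incl : M₁.carrier →ₗ[A] M.carrier) (hincl : ∀ x, ‖incl x‖ = ‖x‖)
    (θ : M.carrier →ₗ[A] M₂.carrier)
    (hθm : IsAnalyticMorphism θ) (hθs : Function.Surjective θ)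
    (hθstrict : IsStrictMorphism θ)
    (hexact : LinearMap.range incl = LinearMap.ker θ)
    (hclosed : LinearMap.range incl ⊓ 𝔭 • (⊤ : Submodule A M.carrier)
      = 𝔭 • LinearMap.range incl)
    (h1 : HasAnalyticallyProjectiveRep 𝔭 M₁)
    (h2 : HasAnalyticallyProjectiveRep 𝔭 M₂) :
    ∃ (F : AnalyticModule A) (π : F.carrier →ₗ[A] M.carrier),
      IsAnalyticallyProjective F ∧ IsAnalyticMorphism π ∧
      Function.Surjective π ∧
      (𝔭 • (⊤ : Submodule A M.carrier)).comap π
        = 𝔭 • (⊤ : Submodule A F.carrier) := by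
  obtain ⟨F₁, π₁, hF₁, hπ₁m, hπ₁s, hπ₁k⟩ := h1
  obtain ⟨F₂, π₂, hF₂, hπ₂m, hπ₂s, hπ₂k⟩ := h2
  obtain ⟨σ, hσm, hσ⟩ := hF₂ M M₂ θ π₂ hθm hθs hθstrict hπ₂m
  have hπs : Function.Surjective (LinearMap.coprod (incl ∘ₗ π₁) σ) :=
    LinearMap.coprod_comp_surjective hexact.ge hπ₁s hπ₂s hσ
  have hπk := LinearMap.ker_coprod_comp_le_smul_top
    (AddMonoidHomClass.isometry_of_norm incl hincl).injective hexact.le hclosed.le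
    hπ₁s hπ₁k hπ₂k hσ
  have hπm : IsAnalyticMorphism (M := F₁.prod F₂) (LinearMap.coprod (incl ∘ₗ π₁) σ) :=
    ((IsAnalyticMorphism.of_norm_map_eq hincl).comp hπ₁m).coprod hσm
  exact ⟨F₁.prod F₂, _, hF₁.prod hF₂, hπm, hπs, Submodule.comap_smul_top_eq_of_ker_le hπs hπk⟩

/-- Let `A` be a commutative normed ring and `𝔭` a prime ideal
of `A`.  Let `0 → M₁ → M →^θ M₂ → 0` be a short exact sequence of analytic
`A`-modules: here `M₁` is embedded in `M` by an isometric linear map `incl`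
whose range is the kernel of `θ`, and `θ` is a surjective morphism.  If the
image of `M₁` is `𝔭`-closed in `M`, `θ` is strict, and both `M₁` and `M₂` admit
analytically projective `𝔭`-representations, then so does `M`; moreover the
representing surjection `π : F → M` can be chosen with `π⁻¹(𝔭M) = 𝔭F`. -/
theorem hasAnalyticallyProjectiveRep_of_ses (𝔭 : Ideal A) [𝔭.IsPrime]
    (M M₁ M₂ : AnalyticModule A)
    (incl : M₁.carrier →ₗ[A] M.carrier) (hincl : ∀ x, ‖incl x‖ = ‖x‖)
    (θ : M.carrier →ₗ[A] M₂.carrier)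
    (hθm : IsAnalyticMorphism θ) (hθs : Function.Surjective θ)
    (hθstrict : IsStrictMorphism θ)
    (hexact : LinearMap.range incl = LinearMap.ker θ)
    (hclosed : LinearMap.range incl ⊓ 𝔭 • (⊤ : Submodule A M.carrier)
      = 𝔭 • LinearMap.range incl)
    (h1 : HasAnalyticallyProjectiveRep 𝔭 M₁)
    (h2 : HasAnalyticallyProjectiveRep 𝔭 M₂) :
    ∃ (F : AnalyticModule A) (π : F.carrier →ₗ[A] M.carrier),
      IsAnalyticallyProjective F ∧ IsAnalyticMorphism π ∧
      Function.Surjective π ∧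
      (𝔭 • (⊤ : Submodule A M.carrier)).comap π
        = 𝔭 • (⊤ : Submodule A F.carrier) :=
  hasAnalyticallyProjectiveRep_of_ses_general 𝔭 M M₁ M₂ incl hincl θ hθm hθs hθstrict hexact hclosed
    h1 h2
end

section
/- Let K be a normed field (with multiplicative norm) and A a commutative K-algebra equipped with a complete nonarchimedean ring norm satisfying ‖c•a‖ ≤ ‖c‖·‖a‖ for c ∈ K, a ∈ A. Let 𝔞 be a closed ideal of A, let (a_i)_{i∈ℕ} be a sequence in A with ‖a_i‖ → 0, and let (r_m)_{m∈ℕ} be a sequence of nonzero elements of K with ‖r_m‖ ≤ 1 for all m and ‖r_m‖ → 0. If for every m the convergent sum Σ_{i=0}^∞ r_m^i • a_i lies in 𝔞, then a_i ∈ 𝔞 for every i. (This is the coefficientwise form of the statement that the restricted power series g(S) = Σ_i a_i S^i lies in 𝔞·A⟨S⟩; for an affinoid algebra A every ideal is automatically closed.) -/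
/-!
If `‖aᵢ‖ ≤ C`, comparison with a geometric series gives `‖∑ cⁱ • aᵢ - a₀‖ ≤ C‖c‖/(1 - ‖c‖)`,
so the values at `r_m → 0`, all in the closed ideal `𝔞`, converge to `a₀`; hence `a₀ ∈ 𝔞`.
Then `c • ∑ cⁱ • aᵢ₊₁ = ∑ cⁱ • aᵢ - a₀ ∈ 𝔞`, and as `c ≠ 0` the shifted sequence satisfies the
same hypotheses, so induction on the index gives every coefficient.
-/

open Filter Topology

section ConstantCoefficient

variable {K A : Type*} [SeminormedRing K] [NormedAddCommGroup A] [CompleteSpace A] [Module K A]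
  [IsBoundedSMul K A] {a : ℕ → A} {C : ℝ}

theorem norm_tsum_pow_smul_sub_le (hC : ∀ i, ‖a i‖ ≤ C) {c : K} (hc : ‖c‖ < 1) :
    ‖∑' i, c ^ i • a i - a 0‖ ≤ C * ‖c‖ * (1 - ‖c‖)⁻¹ := by
  have hgeom : HasSum (fun i => C * ‖c‖ * ‖c‖ ^ i) (C * ‖c‖ * (1 - ‖c‖)⁻¹) :=
    (hasSum_geometric_of_lt_one (norm_nonneg c) hc).mul_left _
  have hbound : ∀ i, ‖c ^ (i + 1) • a (i + 1)‖ ≤ C * ‖c‖ * ‖c‖ ^ i := fun i =>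
    calc ‖c ^ (i + 1) • a (i + 1)‖ ≤ ‖c ^ (i + 1)‖ * ‖a (i + 1)‖ := norm_smul_le _ _
      _ ≤ ‖c‖ ^ (i + 1) * C := by gcongr; exacts [norm_pow_le' c i.succ_pos, hC _]
      _ = C * ‖c‖ * ‖c‖ ^ i := by ring
  rw [tsum_eq_zero_add' (.of_norm_bounded hgeom.summable hbound), pow_zero, one_smul,
    add_sub_cancel_left]
  exact tsum_of_norm_bounded hgeom hbound

theorem tendsto_tsum_pow_smul_nhds_zero (hC : ∀ i, ‖a i‖ ≤ C) :
    Tendsto (fun c : K => ∑' i, c ^ i • a i) (𝓝 0) (𝓝 (a 0)) := by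
  have hnorm : Tendsto (fun c : K => ‖c‖) (𝓝 0) (𝓝 0) := by
    simpa using (continuous_norm.tendsto (0 : K))
  have hbound : Tendsto (fun c : K => C * ‖c‖ * (1 - ‖c‖)⁻¹) (𝓝 0) (𝓝 0) := by
    simpa using (hnorm.const_mul C).mul ((tendsto_const_nhds.sub hnorm).inv₀ (by norm_num))
  rw [tendsto_iff_norm_sub_tendsto_zero]
  refine squeeze_zero' (.of_forall fun _ => norm_nonneg _) ?_ hbound
  filter_upwards [hnorm.eventually (gt_mem_nhds zero_lt_one)] with c hc
  exact norm_tsum_pow_smul_sub_le hC hc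

end ConstantCoefficient

theorem tsum_pow_smul_succ_mem {K A : Type*} [DivisionRing K] [Ring A] [TopologicalSpace A]
    [T2Space A] [ContinuousAdd A] [Module K A] [IsScalarTower K A A] [ContinuousConstSMul K A]
    (𝔞 : Ideal A) {c : K} (hc : c ≠ 0) {a : ℕ → A} (h0 : a 0 ∈ 𝔞)
    (h : ∑' i, c ^ i • a i ∈ 𝔞) : ∑' i, c ^ i • a (i + 1) ∈ 𝔞 := by
  by_cases hs : Summable fun i => c ^ i • a (i + 1)
  · have hs' : Summable fun i => c ^ (i + 1) • a (i + 1) := by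
      simpa only [smul_smul, ← pow_succ'] using hs.const_smul c
    have hsplit : ∑' i, c ^ i • a i = a 0 + c • ∑' i, c ^ i • a (i + 1) := by
      rw [tsum_eq_zero_add' (f := fun i => c ^ i • a i) hs', pow_zero, one_smul,
        ← tsum_const_smul'']
      simp only [smul_smul, ← pow_succ']
    have hmul : c • ∑' i, c ^ i • a (i + 1) ∈ 𝔞 := by
      rw [eq_sub_of_add_eq' hsplit.symm]
      exact 𝔞.sub_mem h h0
    simpa only [smul_smul, inv_mul_cancel₀ hc, one_smul] using 𝔞.smul_of_tower_mem c⁻¹ hmul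
  · rw [tsum_eq_zero_of_not_summable hs]
    exact 𝔞.zero_mem

theorem coeff_mem_of_eval_mem_general {K : Type*} [NormedField K] {A : Type*}
    [NormedCommRing A] [CompleteSpace A] [Algebra K A]
    (hsmul : ∀ (c : K) (a : A), ‖c • a‖ ≤ ‖c‖ * ‖a‖)
    (𝔞 : Ideal A) (h𝔞 : IsClosed (𝔞 : Set A))
    (a : ℕ → A) (ha : Filter.Tendsto (fun i => ‖a i‖) Filter.atTop (nhds 0))
    (r : ℕ → K) (hr0 : ∀ m, r m ≠ 0)
    (hr : Filter.Tendsto (fun m => ‖r m‖) Filter.atTop (nhds 0))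
    (hsum : ∀ m, (∑' i : ℕ, (r m) ^ i • a i) ∈ 𝔞) :
    ∀ i, a i ∈ 𝔞 := by
  have : IsBoundedSMul K A := .of_norm_smul_le hsmul
  have hr' : Tendsto r atTop (𝓝 0) := tendsto_zero_iff_norm_tendsto_zero.2 hr
  have head_mem : ∀ a : ℕ → A, Tendsto (fun i => ‖a i‖) atTop (𝓝 0) →
      (∀ m, ∑' i, r m ^ i • a i ∈ 𝔞) → a 0 ∈ 𝔞 := fun a ha hsum => by
    obtain ⟨C, hC⟩ := ha.bddAbove_range
    exact h𝔞.mem_of_tendsto ((tendsto_tsum_pow_smul_nhds_zero fun i => hC ⟨i, rfl⟩).comp hr')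
      (.of_forall hsum)
  intro i
  induction i generalizing a with
  | zero => exact head_mem a ha hsum
  | succ i ih =>
    exact ih (fun i => a (i + 1)) ((tendsto_add_atTop_iff_nat 1).2 ha)
      fun m => tsum_pow_smul_succ_mem 𝔞 (hr0 m) (head_mem a ha hsum) (hsum m)

/-- Let `K` be a normed field and `A` a commutative
`K`-algebra with a complete nonarchimedean ring norm satisfying
`‖c • a‖ ≤ ‖c‖·‖a‖`.  Let `𝔞` be a closed ideal of `A`, let `(a_i)` be a
sequence in `A` with `‖a_i‖ → 0`, and let `(r_m)` be a sequence of nonzero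
elements of `K` with `‖r_m‖ ≤ 1` and `‖r_m‖ → 0`.  If for every `m` the
convergent sum `Σ_i r_m^i • a_i` lies in `𝔞`, then `a_i ∈ 𝔞` for every `i`.
(Coefficientwise form of: the restricted power series `g(S) = Σ a_i S^i` lies
in `𝔞·A⟨S⟩`.) -/
theorem coeff_mem_of_eval_mem {K : Type*} [NormedField K] {A : Type*}
    [NormedCommRing A] [CompleteSpace A] [Algebra K A]
    (hsmul : ∀ (c : K) (a : A), ‖c • a‖ ≤ ‖c‖ * ‖a‖)
    (hna : ∀ x y : A, ‖x + y‖ ≤ max ‖x‖ ‖y‖)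
    (𝔞 : Ideal A) (h𝔞 : IsClosed (𝔞 : Set A))
    (a : ℕ → A) (ha : Filter.Tendsto (fun i => ‖a i‖) Filter.atTop (nhds 0))
    (r : ℕ → K) (hr0 : ∀ m, r m ≠ 0) (hr1 : ∀ m, ‖r m‖ ≤ 1)
    (hr : Filter.Tendsto (fun m => ‖r m‖) Filter.atTop (nhds 0))
    (hsum : ∀ m, (∑' i : ℕ, (r m) ^ i • a i) ∈ 𝔞) :
    ∀ i, a i ∈ 𝔞 :=
  coeff_mem_of_eval_mem_general hsmul 𝔞 h𝔞 a ha r hr0 hr hsum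
end

section
/- Let K be a normed field (with multiplicative norm) and A a commutative Noetherian K-algebra equipped with a complete nonarchimedean ring norm satisfying ‖c•a‖ ≤ ‖c‖·‖a‖ for c ∈ K, a ∈ A, and assume that every ideal of A is closed and boundedly generated (as holds for every K-affinoid algebra). Let 𝔭 be a prime ideal of A, let (a_i)_{i∈ℕ} be a sequence in A with ‖a_i‖ → 0, and let (r_m)_{m∈ℕ} be a sequence of nonzero elements of K with ‖r_m‖ ≤ 1 and ‖r_m‖ → 0. If for every m the image of the convergent sum Σ_{i=0}^∞ r_m^i • a_i in the localization A_𝔭 is zero, then there exists a single s ∈ A ∖ 𝔭 with s·a_i = 0 for all i; equivalently, the restricted power series f(S) = Σ_i a_i S^i vanishes in A⟨S⟩ ⊗_A A_𝔭. -/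
/-!
Let `I` be the kernel of `A → A_𝔭`; it is a closed ideal. Since `‖r_m‖ → 0`, the values
`f(r_m) ∈ I` converge to `a_0`, so `a_0 ∈ I`. Then `f(S) = a_0 + S·g(S)` and the `r_m` are
units, so `g(r_m) ∈ I` and induction puts every `a_i` in `I`. Finally `A` is Noetherian, so `I`
is finitely generated, and a finitely generated module that dies in `A_𝔭` is killed by a single
`s ∉ 𝔭`.
-/

/-- An ideal `I` of a normed ring is *boundedly generated* if it has finitely
many generators `b₁,…,b_k` and a constant `C > 0` such that every `x ∈ I` can
be written `x = Σ c_j b_j` with `‖c_j‖ ≤ C·‖x‖`. -/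
def BoundedlyGenerated {A : Type*} [NormedCommRing A] (I : Ideal A) : Prop :=
  ∃ (k : ℕ) (b : Fin k → A) (C : ℝ), 0 < C ∧ Ideal.span (Set.range b) = I ∧
    ∀ x ∈ I, ∃ c : Fin k → A, x = ∑ j, c j * b j ∧ ∀ j, ‖c j‖ ≤ C * ‖x‖

open Filter Topology

section RestrictedEval

variable {K A : Type*} [NormedField K] [NormedCommRing A] [Algebra K A] [IsBoundedSMul K A]
  {a : ℕ → A} {c : K}

lemma norm_pow_smul_le_of_norm_le_one (hc : ‖c‖ ≤ 1) (i : ℕ) (x : A) : ‖c ^ i • x‖ ≤ ‖x‖ :=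
  (norm_smul_le _ _).trans <| mul_le_of_le_one_left (norm_nonneg _) <| by
    rw [norm_pow]; exact pow_le_one₀ (norm_nonneg _) hc

lemma tsum_pow_smul_eq_add_smul_tsum (hs : Summable fun i => c ^ i • a i) :
    ∑' i, c ^ i • a i = a 0 + c • ∑' i, c ^ i • a (i + 1) := by
  rw [hs.tsum_eq_zero_add, pow_zero, one_smul, ← tsum_const_smul'']
  simp only [pow_succ', mul_smul]

lemma tsum_pow_smul_succ_mem_s8 {I : Ideal A} (hc : c ≠ 0) (hs : Summable fun i => c ^ i • a i)
    (h0 : a 0 ∈ I) (h : ∑' i, c ^ i • a i ∈ I) : ∑' i, c ^ i • a (i + 1) ∈ I := by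
  rw [tsum_pow_smul_eq_add_smul_tsum hs, I.add_mem_iff_right h0] at h
  rw [← inv_smul_smul₀ hc (∑' i, c ^ i • a (i + 1)), Algebra.smul_def]
  exact I.mul_mem_left _ h

variable [IsUltrametricDist A] [CompleteSpace A]

lemma summable_pow_smul (ha : Tendsto (fun i => ‖a i‖) atTop (𝓝 0)) (hc : ‖c‖ ≤ 1) :
    Summable fun i => c ^ i • a i := by
  refine NonarchimedeanAddGroup.summable_of_tendsto_cofinite_zero ?_
  rw [Nat.cofinite_eq_atTop, tendsto_zero_iff_norm_tendsto_zero]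
  exact squeeze_zero (fun _ => norm_nonneg _) (fun i => norm_pow_smul_le_of_norm_le_one hc i _) ha

lemma norm_tsum_pow_smul_sub_le_s8 (ha : Tendsto (fun i => ‖a i‖) atTop (𝓝 0))
    (hc : ‖c‖ ≤ 1) {M : ℝ} (hM : ∀ i, ‖a i‖ ≤ M) :
    ‖∑' i, c ^ i • a i - a 0‖ ≤ ‖c‖ * M := by
  rw [tsum_pow_smul_eq_add_smul_tsum (summable_pow_smul ha hc), add_sub_cancel_left]
  refine (norm_smul_le _ _).trans (mul_le_mul_of_nonneg_left ?_ (norm_nonneg _))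
  exact IsUltrametricDist.norm_tsum_le_of_forall_le_of_nonneg ((norm_nonneg _).trans (hM 0))
    fun i => (norm_pow_smul_le_of_norm_le_one hc i _).trans (hM _)

lemma tendsto_tsum_pow_smul (ha : Tendsto (fun i => ‖a i‖) atTop (𝓝 0))
    {r : ℕ → K} (hr1 : ∀ m, ‖r m‖ ≤ 1) (hr : Tendsto (fun m => ‖r m‖) atTop (𝓝 0)) :
    Tendsto (fun m => ∑' i, r m ^ i • a i) atTop (𝓝 (a 0)) := by
  obtain ⟨M, hM⟩ := ha.bddAbove_range
  rw [tendsto_iff_norm_sub_tendsto_zero]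
  refine squeeze_zero (fun _ => norm_nonneg _)
    (fun m => norm_tsum_pow_smul_sub_le_s8 ha (hr1 m) fun i => hM ⟨i, rfl⟩) ?_
  simpa using hr.mul_const M

variable {I : Ideal A} {r : ℕ → K}

lemma zero_mem_of_forall_tsum_pow_smul_mem (hI : IsClosed (I : Set A)) (hr1 : ∀ m, ‖r m‖ ≤ 1)
    (hr : Tendsto (fun m => ‖r m‖) atTop (𝓝 0)) (ha : Tendsto (fun i => ‖a i‖) atTop (𝓝 0))
    (hmem : ∀ m, ∑' i, r m ^ i • a i ∈ I) : a 0 ∈ I :=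
  hI.mem_of_tendsto (tendsto_tsum_pow_smul ha hr1 hr) (Eventually.of_forall hmem)

theorem mem_of_forall_tsum_pow_smul_mem (hI : IsClosed (I : Set A)) (hr0 : ∀ m, r m ≠ 0)
    (hr1 : ∀ m, ‖r m‖ ≤ 1) (hr : Tendsto (fun m => ‖r m‖) atTop (𝓝 0))
    (ha : Tendsto (fun i => ‖a i‖) atTop (𝓝 0)) (hmem : ∀ m, ∑' i, r m ^ i • a i ∈ I) (k : ℕ) :
    a k ∈ I := by
  induction k generalizing a with
  | zero => exact zero_mem_of_forall_tsum_pow_smul_mem hI hr1 hr ha hmem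
  | succ k ih =>
    have ha0 := zero_mem_of_forall_tsum_pow_smul_mem hI hr1 hr ha hmem
    exact ih ((tendsto_add_atTop_iff_nat 1).2 ha)
      (fun m => tsum_pow_smul_succ_mem_s8 (hr0 m) (summable_pow_smul ha (hr1 m)) ha0 (hmem m))

end RestrictedEval

theorem exists_notMem_mul_eq_zero_of_algebraMap_eq_zero {A S ι : Type*} [CommRing A]
    [IsNoetherianRing A] [CommRing S] [Algebra A S] (𝔭 : Ideal A) [𝔭.IsPrime]
    [IsLocalization.AtPrime S 𝔭] {a : ι → A} (ha : ∀ i, algebraMap A S (a i) = 0) :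
    ∃ s ∉ 𝔭, ∀ i, s * a i = 0 := by
  set I := RingHom.ker (algebraMap A S)
  have hsupp : (⟨𝔭, inferInstance⟩ : PrimeSpectrum A) ∉ Module.support A I := by
    refine Module.notMem_support_iff'.2 fun ⟨x, hx⟩ => ?_
    obtain ⟨⟨t, ht⟩, htx⟩ := (IsLocalization.map_eq_zero_iff 𝔭.primeCompl S x).1 hx
    exact ⟨t, ht, Subtype.ext htx⟩
  obtain ⟨s, hs, hs𝔭⟩ :=
    SetLike.not_le_iff_exists.1 (Module.mem_support_iff_of_finite.not.1 hsupp)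
  exact ⟨s, hs𝔭, fun i => congrArg Subtype.val
    (Module.mem_annihilator.1 hs ⟨a i, RingHom.mem_ker.2 (ha i)⟩)⟩

theorem coeff_vanish_in_localization_of_eval_vanish_general {K : Type*} [NormedField K]
    {A : Type*} [NormedCommRing A] [CompleteSpace A] [Algebra K A]
    [IsNoetherianRing A]
    (hsmul : ∀ (c : K) (a : A), ‖c • a‖ ≤ ‖c‖ * ‖a‖)
    (hna : ∀ x y : A, ‖x + y‖ ≤ max ‖x‖ ‖y‖)
    (hclosed : ∀ I : Ideal A, IsClosed (I : Set A))
    (𝔭 : Ideal A) [𝔭.IsPrime]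
    (a : ℕ → A) (ha : Filter.Tendsto (fun i => ‖a i‖) Filter.atTop (nhds 0))
    (r : ℕ → K) (hr0 : ∀ m, r m ≠ 0) (hr1 : ∀ m, ‖r m‖ ≤ 1)
    (hr : Filter.Tendsto (fun m => ‖r m‖) Filter.atTop (nhds 0))
    (hsum : ∀ m, algebraMap A (Localization.AtPrime 𝔭)
      (∑' i : ℕ, (r m) ^ i • a i) = 0) :
    ∃ s : A, s ∉ 𝔭 ∧ ∀ i, s * a i = 0 := by
  have : IsBoundedSMul K A := IsBoundedSMul.of_norm_smul_le hsmul
  have : IsUltrametricDist A :=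
    IsUltrametricDist.isUltrametricDist_of_forall_norm_add_le_max_norm hna
  have hker : ∀ i, a i ∈ RingHom.ker (algebraMap A (Localization.AtPrime 𝔭)) :=
    mem_of_forall_tsum_pow_smul_mem (hclosed _) hr0 hr1 hr ha hsum
  exact exists_notMem_mul_eq_zero_of_algebraMap_eq_zero 𝔭 hker

/-- Let `K` be a normed field and `A` a commutative Noetherian
`K`-algebra with a complete nonarchimedean ring norm satisfying
`‖c • a‖ ≤ ‖c‖·‖a‖`, in which every ideal is closed and boundedly generated (as
holds for affinoid algebras).  Let `𝔭` be a prime ideal of `A`, `(a_i)` a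
sequence in `A` with `‖a_i‖ → 0`, and `(r_m)` a sequence of nonzero elements of
`K` with `‖r_m‖ ≤ 1`, `‖r_m‖ → 0`.  If for every `m` the image of the
convergent sum `Σ_i r_m^i • a_i` in the localization `A_𝔭` vanishes, then there
is a single `s ∈ A ∖ 𝔭` with `s·a_i = 0` for all `i`; equivalently the
restricted power series `f(S) = Σ a_i S^i` vanishes in `A⟨S⟩ ⊗_A A_𝔭`. -/
theorem coeff_vanish_in_localization_of_eval_vanish {K : Type*} [NormedField K]
    {A : Type*} [NormedCommRing A] [CompleteSpace A] [Algebra K A]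
    [IsNoetherianRing A]
    (hsmul : ∀ (c : K) (a : A), ‖c • a‖ ≤ ‖c‖ * ‖a‖)
    (hna : ∀ x y : A, ‖x + y‖ ≤ max ‖x‖ ‖y‖)
    (hclosed : ∀ I : Ideal A, IsClosed (I : Set A))
    (hbg : ∀ I : Ideal A, BoundedlyGenerated I)
    (𝔭 : Ideal A) [𝔭.IsPrime]
    (a : ℕ → A) (ha : Filter.Tendsto (fun i => ‖a i‖) Filter.atTop (nhds 0))
    (r : ℕ → K) (hr0 : ∀ m, r m ≠ 0) (hr1 : ∀ m, ‖r m‖ ≤ 1)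
    (hr : Filter.Tendsto (fun m => ‖r m‖) Filter.atTop (nhds 0))
    (hsum : ∀ m, algebraMap A (Localization.AtPrime 𝔭)
      (∑' i : ℕ, (r m) ^ i • a i) = 0) :
    ∃ s : A, s ∉ 𝔭 ∧ ∀ i, s * a i = 0 :=
  coeff_vanish_in_localization_of_eval_vanish_general hsmul hna hclosed 𝔭 a ha r hr0 hr1 hr hsum
end

section
/- Let A be a commutative Noetherian ring and 𝔞 an ideal of A. Then the ideal H_A(𝔞) = {x ∈ A : x·𝔞ⁿ = 0 for some n ≥ 1} is nilpotent if and only if 𝔞 is contained in no minimal prime ideal of A. -/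
/-- Let `A` be a commutative Noetherian ring and `𝔞` an ideal
of `A`.  The ideal `H_A(𝔞) = {x : x·𝔞ⁿ = 0 for some n ≥ 1} = ⋃ₙ Ann_A(𝔞ⁿ)`
(formalized as the supremum `⨆ k, Ann(𝔞^(k+1))`) is nilpotent if and only if
`𝔞` is contained in no minimal prime ideal of `A`. -/
theorem hIdeal_nilpotent_iff_not_le_minimalPrime {A : Type*} [CommRing A]
    [IsNoetherianRing A] (𝔞 : Ideal A) :
    (∃ n : ℕ, 1 ≤ n ∧
      (⨆ k : ℕ, Submodule.annihilator (𝔞 ^ (k + 1) : Ideal A)) ^ n = ⊥) ↔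
    ∀ 𝔭 ∈ minimalPrimes A, ¬ 𝔞 ≤ 𝔭 := by
  classical
  obtain ⟨k, hk⟩ := IsNoetherianRing.isNilpotent_nilradical A
  constructor
  · rintro ⟨n, hn, hH⟩ 𝔭 h𝔭 hle
    haveI hp : 𝔭.IsPrime := h𝔭.1.1
    have hfin : (minimalPrimes A).Finite := minimalPrimes.finite_of_isNoetherianRing A
    set S : Finset (Ideal A) := hfin.toFinset.erase 𝔭 with hS
    have hex : ∀ 𝔮 ∈ S, ∃ a, a ∈ 𝔮 ∧ a ∉ 𝔭 := by
      intro 𝔮 hq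
      have hq𝔭 : 𝔮 ≠ 𝔭 := Finset.ne_of_mem_erase hq
      have hqmin : 𝔮 ∈ minimalPrimes A := by
        simpa using Finset.mem_of_mem_erase hq
      by_contra hcon
      push_neg at hcon
      have h1 : 𝔮 ≤ 𝔭 := fun a ha => hcon a ha
      exact hq𝔭 (le_antisymm h1 (h𝔭.2 ⟨hqmin.1.1, bot_le⟩ h1))
    choose a haq hap using hex
    set s : A := ∏ q ∈ S.attach, a q.1 q.2 with hs
    have hs𝔭 : s ∉ 𝔭 := by
      intro hmem
      obtain ⟨q, hq, hq'⟩ := Ideal.IsPrime.prod_mem_iff.mp hmem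
      exact hap q.1 q.2 hq'
    -- s * 𝔭 ≤ nilradical
    have hkey : Ideal.span {s} * 𝔭 ≤ nilradical A := by
      rw [Ideal.mul_le]
      intro r hr x hx
      obtain ⟨c, rfl⟩ := Ideal.mem_span_singleton'.mp hr
      have hsx : s * x ∈ nilradical A := by
        rw [nilradical_eq_sInf, Submodule.mem_sInf]
        intro q hq
        haveI : Ideal.IsPrime q := hq
        obtain ⟨𝔮, h𝔮min, h𝔮q⟩ := Ideal.exists_minimalPrimes_le (bot_le (a := q))
        have h𝔮min' : 𝔮 ∈ minimalPrimes A := h𝔮min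
        by_cases h : 𝔮 = 𝔭
        · exact h𝔮q (h ▸ Ideal.mul_mem_left _ s hx)
        · have hqS : 𝔮 ∈ S := by
            rw [hS]
            exact Finset.mem_erase.mpr ⟨h, hfin.mem_toFinset.mpr h𝔮min'⟩
          have : a 𝔮 hqS ∣ s := Finset.dvd_prod_of_mem _ (Finset.mem_attach _ ⟨𝔮, hqS⟩)
          obtain ⟨d, hd⟩ := this
          have : s ∈ 𝔮 := hd ▸ Ideal.mul_mem_right _ _ (haq 𝔮 hqS)
          exact h𝔮q (Ideal.mul_mem_right _ _ this)
      have : c * s * x = c * (s * x) := by ring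
      rw [this]
      exact Ideal.mul_mem_left _ c hsx
    -- s^(k+1) annihilates 𝔭^(k+1)
    have hpow : (Ideal.span {s} * 𝔭) ^ (k + 1) = ⊥ := by
      refine le_antisymm ?_ bot_le
      calc (Ideal.span {s} * 𝔭) ^ (k + 1) ≤ (nilradical A) ^ (k + 1) :=
            Ideal.pow_right_mono hkey _
        _ = (nilradical A) ^ k * nilradical A := pow_succ _ _
        _ = ⊥ := by rw [hk]; simp
    have hann : s ^ (k + 1) ∈ Submodule.annihilator (𝔞 ^ (k + 1) : Ideal A) := by
      rw [Submodule.mem_annihilator]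
      intro y hy
      have hy' : y ∈ (𝔭 : Ideal A) ^ (k + 1) := Ideal.pow_right_mono hle _ hy
      have h1 : s ^ (k + 1) * y ∈ (Ideal.span {s}) ^ (k + 1) * 𝔭 ^ (k + 1) :=
        Ideal.mul_mem_mul (Ideal.pow_mem_pow (Ideal.mem_span_singleton_self s) _) hy'
      rw [← mul_pow, hpow] at h1
      simpa using h1
    have hsH : s ^ (k + 1) ∈ (⨆ j : ℕ, Submodule.annihilator (𝔞 ^ (j + 1) : Ideal A)) :=
      (le_iSup (fun j : ℕ => Submodule.annihilator (𝔞 ^ (j + 1) : Ideal A)) k) hann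
    have h2 : (s ^ (k + 1)) ^ n ∈
        ((⨆ j : ℕ, Submodule.annihilator (𝔞 ^ (j + 1) : Ideal A)) ^ n : Ideal A) :=
      Ideal.pow_mem_pow hsH n
    rw [hH] at h2
    have : s ^ (k + 1) ∈ 𝔭 := hp.mem_of_pow_mem n (by simpa using h2.symm ▸ (Submodule.mem_bot A).mp h2 ▸ 𝔭.zero_mem)
    exact hs𝔭 (hp.mem_of_pow_mem _ this)
  · intro h
    refine ⟨k + 1, Nat.succ_le_succ (Nat.zero_le _), ?_⟩
    have hH : (⨆ j : ℕ, Submodule.annihilator (𝔞 ^ (j + 1) : Ideal A)) ≤ nilradical A := by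
      rw [iSup_le_iff]
      intro j x hx
      rw [nilradical_eq_sInf, Submodule.mem_sInf]
      intro q hq
      haveI : Ideal.IsPrime q := hq
      obtain ⟨𝔭, h𝔭min, h𝔭q⟩ := Ideal.exists_minimalPrimes_le (bot_le (a := q))
      have h𝔭min' : 𝔭 ∈ minimalPrimes A := h𝔭min
      haveI hp : 𝔭.IsPrime := h𝔭min'.1.1
      obtain ⟨b, hb𝔞, hb𝔭⟩ := SetLike.not_le_iff_exists.mp (h 𝔭 h𝔭min')
      have hzero : x * b ^ (j + 1) = 0 :=
        Submodule.mem_annihilator.mp hx _ (Ideal.pow_mem_pow hb𝔞 _)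
      have : x * b ^ (j + 1) ∈ 𝔭 := by rw [hzero]; exact 𝔭.zero_mem
      rcases hp.mem_or_mem this with h1 | h1
      · exact h𝔭q h1
      · exact absurd (hp.mem_of_pow_mem _ h1) hb𝔭
    refine le_antisymm ?_ bot_le
    calc (⨆ j : ℕ, Submodule.annihilator (𝔞 ^ (j + 1) : Ideal A)) ^ (k + 1)
        ≤ (nilradical A) ^ (k + 1) := Ideal.pow_right_mono hH _
      _ = (nilradical A) ^ k * nilradical A := pow_succ _ _
      _ = ⊥ := by rw [hk]; simp
end

section
/- Let S be a commutative Noetherian ring and 𝔞 a proper ideal of S such that the 𝔞-adic topology on S is separated, i.e. ⋂_{n≥1} 𝔞ⁿ = 0. Let S → A be a ring morphism, F an S-module, and π: F → A a surjective S-module map whose kernel H = ker π satisfies H ⊆ 𝔞F. Let x ∈ S be a non-zero-divisor such that H ⊆ xF and such that x ∈ I for every ideal I of S with H ⊆ I·F (i.e. the principal ideal (x) is the smallest ideal f of S with H ⊆ f·F). Then there exists h ∈ A with h ∉ 𝔞A and x·h = 0 in A. -/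
/-!
If no element of `A \ 𝔞A` were killed by `x`, then writing an element of `H` as `x • f`,
the image `π f` is killed by `x`, so lies in `𝔞A`, and since `H ⊆ 𝔞F` this forces `f ∈ 𝔞F`.
Hence `H ⊆ x𝔞F`, and minimality of `(x)` gives `x ∈ x𝔞`, i.e. `x = x a` with `a ∈ 𝔞`.
Cancelling the non-zero-divisor `x` yields `a = 1`, contradicting `𝔞 ≠ S`.
-/

namespace Submodule

variable {S : Type*} [CommRing S] {F M : Type*} [AddCommGroup F] [Module S F]
  [AddCommGroup M] [Module S M]

theorem mem_smul_top_of_apply_mem_smul_top {I : Ideal S} {π : F →ₗ[S] M}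
    (hπ : Function.Surjective π) (hker : LinearMap.ker π ≤ I • (⊤ : Submodule S F))
    {f : F} (hf : π f ∈ I • (⊤ : Submodule S M)) : f ∈ I • (⊤ : Submodule S F) := by
  rw [← LinearMap.range_eq_top.mpr hπ, ← Submodule.map_top, ← Submodule.map_smul''] at hf
  obtain ⟨g, hg, hgf⟩ := hf
  have hfg : f - g ∈ LinearMap.ker π := by simp [hgf]
  simpa using add_mem (hker hfg) hg

theorem ker_le_span_singleton_mul_smul_top {𝔞 : Ideal S} {π : F →ₗ[S] M}
    (hπ : Function.Surjective π) (hH : LinearMap.ker π ≤ 𝔞 • (⊤ : Submodule S F))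
    {x : S} (hxF : LinearMap.ker π ≤ Ideal.span {x} • (⊤ : Submodule S F))
    (htors : ∀ m : M, x • m = 0 → m ∈ 𝔞 • (⊤ : Submodule S M)) :
    LinearMap.ker π ≤ (Ideal.span {x} * 𝔞) • (⊤ : Submodule S F) := by
  intro η hη
  have hη' := hxF hη
  rw [ideal_span_singleton_smul] at hη'
  obtain ⟨f, -, rfl⟩ := Set.mem_smul_set.mp hη'
  have hxf : x • π f = 0 := by rw [← map_smul]; exact hη
  rw [mul_smul]
  exact smul_mem_smul (Ideal.mem_span_singleton_self x)
    (mem_smul_top_of_apply_mem_smul_top hπ hH (htors _ hxf))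

end Submodule

theorem Ideal.eq_top_of_mem_span_singleton_mul {S : Type*} [CommRing S] {𝔞 : Ideal S} {x : S}
    (hx : x ∈ nonZeroDivisors S) (hmem : x ∈ Ideal.span {x} * 𝔞) : 𝔞 = ⊤ := by
  obtain ⟨a, ha, hxa⟩ := Ideal.mem_span_singleton_mul.mp hmem
  have hax : (1 - a) * x = 0 := by linear_combination -hxa
  rw [← sub_eq_zero.mp (hx.2 _ hax)] at ha
  exact (Ideal.eq_top_iff_one 𝔞).mpr ha

theorem exists_killed_by_flatificator_generator_general {S : Type*} [CommRing S]
    (𝔞 : Ideal S) (h𝔞 : 𝔞 ≠ ⊤)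
    {A : Type*} [CommRing A] [Algebra S A]
    {F : Type*} [AddCommGroup F] [Module S F]
    (π : F →ₗ[S] A) (hπ : Function.Surjective π)
    (hH : LinearMap.ker π ≤ 𝔞 • (⊤ : Submodule S F))
    (x : S) (hx : x ∈ nonZeroDivisors S)
    (hxF : LinearMap.ker π ≤ Ideal.span {x} • (⊤ : Submodule S F))
    (hmin : ∀ I : Ideal S, LinearMap.ker π ≤ I • (⊤ : Submodule S F) → x ∈ I) :
    ∃ h : A, h ∉ Ideal.map (algebraMap S A) 𝔞 ∧ x • h = 0 := by
  by_contra! hcon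
  have htors : ∀ h : A, x • h = 0 → h ∈ 𝔞 • (⊤ : Submodule S A) := fun h hh => by
    rw [Ideal.smul_top_eq_map]
    by_contra hmem
    exact hcon h hmem hh
  exact h𝔞 <| Ideal.eq_top_of_mem_span_singleton_mul hx <|
    hmin _ (Submodule.ker_le_span_singleton_mul_smul_top hπ hH hxF htors)

/-- Let `S` be a commutative Noetherian ring and `𝔞` a proper
ideal of `S` with `⋂_{n≥1} 𝔞ⁿ = 0` (the `𝔞`-adic topology is separated).  Let
`S → A` be a ring morphism, `F` an `S`-module and `π : F → A` a surjective
`S`-linear map with `H = ker π ⊆ 𝔞F`.  Let `x ∈ S` be a non-zero-divisor such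
that `H ⊆ xF` and `(x)` is the smallest ideal `f` of `S` with `H ⊆ f·F`
(i.e. `x ∈ I` for every ideal `I` with `H ⊆ I·F`).  Then there is `h ∈ A` with
`h ∉ 𝔞A` and `x·h = 0` in `A`. -/
theorem exists_killed_by_flatificator_generator {S : Type*} [CommRing S]
    [IsNoetherianRing S] (𝔞 : Ideal S) (h𝔞 : 𝔞 ≠ ⊤)
    (hsep : (⨅ n : ℕ, 𝔞 ^ (n + 1)) = ⊥)
    {A : Type*} [CommRing A] [Algebra S A]
    {F : Type*} [AddCommGroup F] [Module S F]
    (π : F →ₗ[S] A) (hπ : Function.Surjective π)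
    (hH : LinearMap.ker π ≤ 𝔞 • (⊤ : Submodule S F))
    (x : S) (hx : x ∈ nonZeroDivisors S)
    (hxF : LinearMap.ker π ≤ Ideal.span {x} • (⊤ : Submodule S F))
    (hmin : ∀ I : Ideal S, LinearMap.ker π ≤ I • (⊤ : Submodule S F) → x ∈ I) :
    ∃ h : A, h ∉ Ideal.map (algebraMap S A) 𝔞 ∧ x • h = 0 :=
  exists_killed_by_flatificator_generator_general 𝔞 h𝔞 π hπ hH x hx hxF hmin
end

section
/- Let A be a commutative ring and let F₁ and F₂ be founded A-modules. Then the direct sum F₁ ⊕ F₂ is a founded A-module. -/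
/-- An `A`-module `F` is *founded* if for every submodule `H` of `F` one has
`H ⊆ f_H·F`, where `f_H` is the intersection of all ideals `I` of `A` with
`H ⊆ I·F`. -/
def IsFounded (A : Type*) [CommRing A] (F : Type*) [AddCommGroup F]
    [Module A F] : Prop :=
  ∀ H : Submodule A F,
    H ≤ sInf {I : Ideal A | H ≤ I • (⊤ : Submodule A F)}
      • (⊤ : Submodule A F)

lemma smul_top_prod_eq {A F₁ F₂ : Type*} [CommRing A]
    [AddCommGroup F₁] [Module A F₁] [AddCommGroup F₂] [Module A F₂]
    (I : Ideal A) :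
    I • (⊤ : Submodule A (F₁ × F₂)) =
      (I • (⊤ : Submodule A F₁)).prod (I • (⊤ : Submodule A F₂)) := by
  apply le_antisymm
  · rw [Submodule.smul_le]
    intro x hx p _
    exact ⟨Submodule.smul_mem_smul hx trivial, Submodule.smul_mem_smul hx trivial⟩
  · rintro ⟨p, q⟩ ⟨hp, hq⟩
    have e : (p, q) = (LinearMap.inl A F₁ F₂) p + (LinearMap.inr A F₁ F₂) q := by
      simp
    rw [e]
    apply Submodule.add_mem
    · have := Submodule.map_smul'' I (⊤ : Submodule A F₁) (LinearMap.inl A F₁ F₂)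
      have h1 : (LinearMap.inl A F₁ F₂) p ∈
          Submodule.map (LinearMap.inl A F₁ F₂) (I • ⊤) := ⟨p, hp, rfl⟩
      rw [this] at h1
      exact Submodule.smul_mono le_rfl le_top h1
    · have := Submodule.map_smul'' I (⊤ : Submodule A F₂) (LinearMap.inr A F₁ F₂)
      have h2 : (LinearMap.inr A F₁ F₂) q ∈
          Submodule.map (LinearMap.inr A F₁ F₂) (I • ⊤) := ⟨q, hq, rfl⟩
      rw [this] at h2
      exact Submodule.smul_mono le_rfl le_top h2

/-- Let `A` be a commutative ring and `F₁`, `F₂` founded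
`A`-modules.  Then the direct sum `F₁ ⊕ F₂` is a founded `A`-module. -/
theorem isFounded_prod {A F₁ F₂ : Type*} [CommRing A]
    [AddCommGroup F₁] [Module A F₁] [AddCommGroup F₂] [Module A F₂]
    (h1 : IsFounded A F₁) (h2 : IsFounded A F₂) :
    IsFounded A (F₁ × F₂) := by
  intro H
  set H₁ := H.map (LinearMap.fst A F₁ F₂) with hH₁
  set H₂ := H.map (LinearMap.snd A F₁ F₂) with hH₂
  set J := sInf {I : Ideal A | H ≤ I • (⊤ : Submodule A (F₁ × F₂))} with hJ
  have key₁ : sInf {I : Ideal A | H₁ ≤ I • (⊤ : Submodule A F₁)} ≤ J := by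
    apply sInf_le_sInf
    intro I hI
    rintro _ ⟨⟨p, q⟩, hpq, rfl⟩
    have := hI hpq
    rw [smul_top_prod_eq] at this
    exact this.1
  have key₂ : sInf {I : Ideal A | H₂ ≤ I • (⊤ : Submodule A F₂)} ≤ J := by
    apply sInf_le_sInf
    intro I hI
    rintro _ ⟨⟨p, q⟩, hpq, rfl⟩
    have := hI hpq
    rw [smul_top_prod_eq] at this
    exact this.2
  intro x hx
  rw [smul_top_prod_eq]
  constructor
  · exact Submodule.smul_mono key₁ le_rfl (h1 H₁ ⟨x, hx, rfl⟩)
  · exact Submodule.smul_mono key₂ le_rfl (h2 H₂ ⟨x, hx, rfl⟩)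
end
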